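/- The pair (F₂ × F₂, {x, y, c, d}) with presentation ⟨x,y,c,d | xc=cx, yc=cy, xcd=dxc, ycd=dyc⟩ is not minimally almost convex: there is no function f with f(r) ≤ 2r - 1 for all r and no r₀ such that any two elements u, v of word length exactly r > r₀ with d(u,v) ≤ 2 are joined by a path of length at most f(r) inside the ball of radius r. -/

import Mathlib

/-- The word length of `g` with respect to a generating set `S`: the least `n`
such that `g` is a product of `n` elements of `S ∪ S⁻¹`. -/
noncomputable def wordLength {G : Type*} [Group G] (S : Set G) (g : G) : ℕ :=
  sInf {n | ∃ l : List G, l.length = n ∧ (∀ x ∈ l, x ∈ S ∨ x⁻¹ ∈ S) ∧ l.prod = g}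

/-- Relators of ⟨a,b,c,t | ac=ca, bc=cb, act=tac, bct=tbc⟩, with
a = 0, b = 1, c = 2, t = 3. -/
def grels : Set (FreeGroup (Fin 4)) :=
  { FreeGroup.of 0 * FreeGroup.of 2 * (FreeGroup.of 2 * FreeGroup.of 0)⁻¹,
    FreeGroup.of 1 * FreeGroup.of 2 * (FreeGroup.of 2 * FreeGroup.of 1)⁻¹,
    FreeGroup.of 0 * FreeGroup.of 2 * FreeGroup.of 3 *
      (FreeGroup.of 3 * FreeGroup.of 0 * FreeGroup.of 2)⁻¹,
    FreeGroup.of 1 * FreeGroup.of 2 * FreeGroup.of 3 *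
      (FreeGroup.of 3 * FreeGroup.of 1 * FreeGroup.of 2)⁻¹ }

/-- The group G = ⟨a,b,c,t | ac=ca, bc=cb, act=tac, bct=tbc⟩ ≅ F₂ × F₂. -/
abbrev G : Type := PresentedGroup grels

/-- The generator a of G. -/
def ga : G := PresentedGroup.of 0
/-- The generator b of G. -/
def gb : G := PresentedGroup.of 1
/-- The generator c of G. -/
def gc : G := PresentedGroup.of 2
/-- The generator t of G. -/
def gt : G := PresentedGroup.of 3

/-- The generating set S₂ = {a, b, c, t} of G. -/
def SG : Set G := {ga, gb, gc, gt}

/-- `steps` is a sequence of generator steps tracing a path in the Cayley graph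
of `(G,S)` from `u` to `v` all of whose vertices lie in the set `B`. -/
def IsPathIn {G : Type*} [Group G] (S : Set G) (B : Set G) (u v : G)
    (steps : List G) : Prop :=
  (∀ x ∈ steps, x ∈ S ∨ x⁻¹ ∈ S) ∧ u * steps.prod = v ∧
    ∀ l, l <+: steps → u * l.prod ∈ B

/-- The almost convexity condition AC_{f,r₀} for a pair (G,S): any two points
of word length exactly r > r₀ at distance at most 2 are joined by a path of
length at most f(r) inside the ball of radius r. -/
def AlmostConvex {G : Type*} [Group G] (S : Set G) (f : ℕ → ℕ) (r₀ : ℕ) : Prop :=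
  ∀ r, r₀ < r → ∀ u v : G, wordLength S u = r → wordLength S v = r →
    wordLength S (u⁻¹ * v) ≤ 2 →
    ∃ steps : List G,
      IsPathIn S {g | wordLength S g ≤ r} u v steps ∧ steps.length ≤ f r

/-!
Put `n = m + 2`, `u = aⁿ b⁻¹ a⁻⁽ⁿ⁻¹⁾` and `v = u t a`. Since `u` commutes with `t`,
`v = t aⁿ b⁻¹ a⁻⁽ⁿ⁻²⁾`; both elements have length `2n`, and `u⁻¹ v = t a`.

The group is `F₂ × F₂`: `proj₁` sends `a, b, c, t` to `x, y, 1, 1` and `proj₂` sends them to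
`C⁻¹, C⁻¹, C, D`, where `x, y` and `C, D` stand for the generators `of 0, of 1` of
`FreeGroup (Fin 2)`. Every generator changes `|proj₁ g| + |exponent sum of c in g|` by at most one
and changes the parity of `|proj₂ g|`, so these bound the word length from below and fix its
parity.

Along a path from `u` to `v` the second coordinate travels in the Cayley tree of `F₂` from `1`
to `D C⁻¹`, so at some step it crosses the edge from `1` to `D`, by a letter `t`, at a vertex `g`
with `proj₂ g = 1`; write `ω = proj₁ g`. The vertex `g t` lies in the ball of radius `2n` and has
odd length, hence length at most `2n - 1`, which gives `|ω| + |σ ω| < 2n` (`σ` the exponent sum).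
In the tree, the common prefix of `ω` with the reduced words of `proj₁ u` and `proj₁ v` then
shows that the lower bound puts `g` at distance `≥ 2n` from `u` and `g t` at distance
`≥ 2n - 1` from `v`. So the path has length at least `4n = 2(2n)`, more than `2r - 1` for `r = 2n`.
-/

section WordLength

variable {G : Type*} [Group G] {S : Set G}

theorem wordLength_prod_le {l : List G} (hl : ∀ x ∈ l, x ∈ S ∨ x⁻¹ ∈ S) :
    wordLength S l.prod ≤ l.length :=
  Nat.sInf_le ⟨l, rfl, hl, rfl⟩

theorem exists_length_eq_wordLength (hS : Subgroup.closure S = ⊤) (g : G) :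
    ∃ l : List G, (∀ x ∈ l, x ∈ S ∨ x⁻¹ ∈ S) ∧ l.prod = g ∧ l.length = wordLength S g := by
  have hg : g ∈ Submonoid.closure (S ∪ S⁻¹) := by
    rw [← Subgroup.closure_toSubmonoid, hS]
    trivial
  obtain ⟨l, hl, hprod⟩ := Submonoid.exists_list_of_mem_closure hg
  obtain ⟨l', hlen, hl', hprod'⟩ := Nat.sInf_mem (⟨l.length, l, rfl, hl, hprod⟩ :
    {n | ∃ l : List G, l.length = n ∧ (∀ x ∈ l, x ∈ S ∨ x⁻¹ ∈ S) ∧ l.prod = g}.Nonempty)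
  exact ⟨l', hl', hprod', hlen⟩

section Subadditive

variable (φ : G → ℕ) (h_one : φ 1 = 0) (h_mul : ∀ x y, φ (x * y) ≤ φ x + φ y)
  (h_gen : ∀ s, s ∈ S ∨ s⁻¹ ∈ S → φ s ≤ 1)
include h_one h_mul h_gen

theorem le_length_of_subadditive {l : List G} (hl : ∀ x ∈ l, x ∈ S ∨ x⁻¹ ∈ S) :
    φ l.prod ≤ l.length := by
  induction l with
  | nil => simp [h_one]
  | cons s l ih =>
    grw [List.prod_cons, h_mul, h_gen s (hl s List.mem_cons_self),
      ih fun x hx => hl x (List.mem_cons_of_mem s hx), List.length_cons, add_comm]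

theorem le_wordLength_of_subadditive (hS : Subgroup.closure S = ⊤) (g : G) :
    φ g ≤ wordLength S g := by
  obtain ⟨l, hl, rfl, hlen⟩ := exists_length_eq_wordLength hS g
  exact hlen ▸ le_length_of_subadditive φ h_one h_mul h_gen hl

end Subadditive

theorem natCast_wordLength_eq_toAdd (hS : Subgroup.closure S = ⊤)
    (χ : G →* Multiplicative (ZMod 2)) (hχ : ∀ s ∈ S, χ s = Multiplicative.ofAdd 1) (g : G) :
    (wordLength S g : ZMod 2) = (χ g).toAdd := by
  obtain ⟨l, hl, rfl, hlen⟩ := exists_length_eq_wordLength hS g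
  rw [← hlen]
  clear hlen
  induction l with
  | nil => simp
  | cons s l ih =>
    have hs : (χ s).toAdd = 1 := by
      rcases hl s List.mem_cons_self with h | h
      · simp [hχ s h]
      · simpa using congrArg Multiplicative.toAdd (hχ _ h)
    simp [ih fun x hx => hl x (List.mem_cons_of_mem s hx), hs, add_comm]

end WordLength

namespace FreeGroup

variable {α : Type*}

section WeightSum

variable (w : α → ℤ)

def weightSum (x : FreeGroup α) : ℤ :=
  Multiplicative.toAdd (lift (fun a => Multiplicative.ofAdd (w a)) x)

@[simp] theorem weightSum_one : weightSum w 1 = 0 := by simp [weightSum]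

@[simp] theorem weightSum_mul (x y : FreeGroup α) :
    weightSum w (x * y) = weightSum w x + weightSum w y := by
  simp [weightSum]

@[simp] theorem weightSum_inv (x : FreeGroup α) : weightSum w x⁻¹ = -weightSum w x := by
  simp [weightSum]

@[simp] theorem weightSum_pow (x : FreeGroup α) (n : ℕ) :
    weightSum w (x ^ n) = n * weightSum w x := by
  simp [weightSum]

@[simp] theorem weightSum_of (a : α) : weightSum w (of a) = w a := by simp [weightSum]

theorem weightSum_mk (L : List (α × Bool)) :
    weightSum w (mk L) = (L.map fun a => if a.2 then w a.1 else -w a.1).sum := by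
  simp only [weightSum, lift_mk, toAdd_list_sum, List.map_map]
  congr 1
  refine List.map_congr_left fun ⟨a, b⟩ _ => ?_
  cases b <;> rfl

theorem natAbs_weightSum_le_norm [DecidableEq α] (hw : ∀ a, (w a).natAbs ≤ 1)
    (x : FreeGroup α) : (weightSum w x).natAbs ≤ norm x := by
  rw [norm, ← mk_toWord (x := x), weightSum_mk, mk_toWord]
  induction x.toWord with
  | nil => simp
  | cons a L ih =>
    grw [List.map_cons, List.sum_cons, Int.natAbs_add_le, ih]
    have := hw a.1
    split_ifs <;> simp only [Int.natAbs_neg, List.length_cons] <;> omega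

theorem le_weightSum_mk_of_append_eq {a b : α} {n k : ℕ} {P S : List (α × Bool)}
    (h : List.replicate n (a, true) ++ (b, false) :: List.replicate k (a, false) = P ++ S) :
    (P.length : ℤ) ≤ weightSum 1 (mk P) ∨ 2 * (n : ℤ) ≤ P.length + weightSum 1 (mk P) := by
  rcases List.append_eq_append_iff.1 h with ⟨C, rfl, hS⟩ | ⟨A, hP, -⟩
  · rcases C with _ | ⟨c, C⟩
    · left
      simp [weightSum_mk]
    · obtain ⟨rfl, hC⟩ := List.cons_eq_cons.1 hS
      obtain ⟨-, hC, -⟩ := List.append_eq_replicate_iff.1 hC.symm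
      right
      rw [hC, weightSum_mk]
      simp only [List.length_append, List.length_replicate, List.length_cons, List.map_append,
        List.map_replicate, List.map_cons, List.sum_append, List.sum_replicate, List.sum_cons,
        Pi.one_apply, if_true, Bool.false_eq_true, if_false, nsmul_eq_mul]
      push_cast
      omega
  · obtain ⟨-, hP, -⟩ := List.append_eq_replicate_iff.1 hP.symm
    left
    rw [hP, weightSum_mk]
    simp

end WeightSum

variable [DecidableEq α] {L L₁ L₂ : List (α × Bool)}

theorem IsReduced.invRev (h : IsReduced L) : IsReduced (invRev L) := by
  rw [isReduced_iff_reduce_eq, reduce_invRev, h.reduce_eq]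

theorem norm_mk_of_isReduced (h : IsReduced L) : norm (mk L) = L.length := by
  rw [norm, toWord_mk, h.reduce_eq]

theorem IsReduced.exists_common_prefix (h₁ : IsReduced L₁) (h₂ : IsReduced L₂) :
    ∃ P S T, L₁ = P ++ S ∧ L₂ = P ++ T ∧ IsReduced (FreeGroup.invRev S ++ T) := by
  induction L₁ generalizing L₂ with
  | nil => exact ⟨[], [], L₂, rfl, rfl, by simpa [FreeGroup.invRev] using h₂⟩
  | cons a L₁ ih =>
    cases L₂ with
    | nil => exact ⟨[], a :: L₁, [], rfl, rfl, by simpa using h₁.invRev⟩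
    | cons b L₂ =>
      by_cases hab : a = b
      · subst hab
        obtain ⟨P, S, T, rfl, rfl, h⟩ :=
          ih (h₁.infix (List.suffix_cons _ _).isInfix) (h₂.infix (List.suffix_cons _ _).isInfix)
        exact ⟨a :: P, S, T, rfl, rfl, h⟩
      · refine ⟨[], a :: L₁, b :: L₂, rfl, rfl, ?_⟩
        rw [invRev_cons]
        refine IsReduced.append_overlap (L₂ := FreeGroup.invRev [a])
          (invRev_cons (L := L₁) ▸ h₁.invRev) ?_ (by simp [FreeGroup.invRev])
        refine isReduced_cons_cons.2 ⟨fun h => ?_, h₂⟩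
        obtain ⟨a₁, a₂⟩ := a
        obtain ⟨b₁, b₂⟩ := b
        cases a₂ <;> cases b₂ <;> simp_all

theorem exists_toWord_eq_append_norm_inv_mul (x y : FreeGroup α) :
    ∃ P S T, x.toWord = P ++ S ∧ y.toWord = P ++ T ∧ norm (x⁻¹ * y) = S.length + T.length := by
  obtain ⟨P, S, T, hx, hy, h⟩ :=
    IsReduced.exists_common_prefix (isReduced_toWord (x := x)) (isReduced_toWord (x := y))
  refine ⟨P, S, T, hx, hy, ?_⟩
  have : x⁻¹ * y = mk (invRev S ++ T) := by
    rw [← mk_toWord (x := x), ← mk_toWord (x := y), hx, hy, ← mul_mk, ← mul_mk, ← mul_mk,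
      ← inv_mk]
    group
  rw [this, norm_mk_of_isReduced h, List.length_append, invRev_length]

theorem toWord_mul_mk_singleton_prefix (x : FreeGroup α) (b : α × Bool) :
    (x * mk [b]).toWord <+: x.toWord ++ [b] := by
  by_cases hlast : x.toWord.getLast? = some (b.1, !b.2)
  · obtain ⟨L, hL⟩ : ∃ L, x.toWord = L ++ [(b.1, !b.2)] :=
      ⟨_, (List.dropLast_append_getLast? _ hlast).symm⟩
    have hred : IsReduced L :=
      (isReduced_toWord (x := x)).infix ⟨[], [(b.1, !b.2)], by simp [hL]⟩
    have hcancel : mk ([(b.1, !b.2)] ++ [b]) = 1 :=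
      (reduce.exact (L₂ := []) (reduce_invRev_left_cancel (L := [b]))).trans one_eq_mk.symm
    have : x * mk [b] = mk L := by
      rw [← mk_toWord (x := x), hL, mul_mk, List.append_assoc, ← mul_mk, hcancel, mul_one]
    rw [this, toWord_mk, hred.reduce_eq, hL, List.append_assoc]
    exact List.prefix_append _ _
  · have hred : IsReduced (x.toWord ++ [b]) := by
      refine List.isChain_append.2 ⟨isReduced_toWord, List.isChain_singleton b, ?_⟩
      rintro a ha _ ⟨⟩ h
      by_contra hne
      refine hlast (ha.trans (congrArg some (Prod.ext h ?_)))
      revert hne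
      cases a.2 <;> cases b.2 <;> simp
    rw [← mk_toWord (x := x), mul_mk, toWord_mk, hred.reduce_eq, toWord_mk, reduce_toWord]

theorem eq_one_of_head_toWord_mul {x y : FreeGroup α} {c : α × Bool} (hy : norm y = 1)
    (hx : x.toWord.head? ≠ some c) (hxy : (x * y).toWord.head? = some c) :
    x = 1 ∧ y = mk [c] := by
  obtain ⟨b, hb⟩ := List.length_eq_one_iff.1 hy
  rw [← mk_toWord (x := y), hb] at hxy ⊢
  rcases hnil : x.toWord with _ | ⟨a, L⟩
  · rw [toWord_eq_nil_iff] at hnil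
    subst hnil
    simp_all [toWord_mk]
  · obtain ⟨P, hP⟩ := toWord_mul_mk_singleton_prefix x b
    obtain ⟨Q, hQ⟩ := List.head?_eq_some_iff.1 hxy
    rw [hQ, hnil, List.cons_append, List.cons_append, List.cons.injEq] at hP
    exact (hx (by rw [hnil, hP.1]; rfl)).elim

section PowMulInvMulInvPow

variable {a b : α} (n k : ℕ)

variable (hab : a ≠ b)
include hab

theorem toWord_pow_mul_inv_mul_inv_pow :
    (of a ^ n * (of b)⁻¹ * (of a ^ k)⁻¹).toWord =
      List.replicate n (a, true) ++ (b, false) :: List.replicate k (a, false) := by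
  have hred :
      IsReduced (List.replicate n (a, true) ++ (b, false) :: List.replicate k (a, false)) := by
    simp [IsReduced, List.isChain_append, List.isChain_cons, List.isChain_replicate_of_rel,
      List.head?_replicate, List.getLast?_replicate, hab, hab.symm]
  have hpow (m : ℕ) : of a ^ m = mk (List.replicate m (a, true)) := by
    rw [← toWord_of_pow, mk_toWord]
  rw [← hred.reduce_eq, ← toWord_mk, List.append_cons, ← mul_mk, ← mul_mk, hpow, hpow, inv_mk,
    of, inv_mk]
  simp [FreeGroup.invRev]

theorem norm_pow_mul_inv_mul_inv_pow :
    norm (of a ^ n * (of b)⁻¹ * (of a ^ k)⁻¹) = n + 1 + k := by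
  rw [norm, toWord_pow_mul_inv_mul_inv_pow n k hab]
  simp only [List.length_append, List.length_replicate, List.length_cons]
  ring

theorem add_one_add_le_norm_inv_mul (w : FreeGroup α)
    (hw : norm w + (weightSum 1 w).natAbs < 2 * n) :
    n + 1 + k ≤ norm ((of a ^ n * (of b)⁻¹ * (of a ^ k)⁻¹)⁻¹ * w) + (weightSum 1 w).natAbs := by
  obtain ⟨P, S, T, hx, hy, hnorm⟩ :=
    exists_toWord_eq_append_norm_inv_mul (of a ^ n * (of b)⁻¹ * (of a ^ k)⁻¹) w
  rw [toWord_pow_mul_inv_mul_inv_pow n k hab] at hx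
  have hlen := congrArg List.length hx
  simp only [List.length_append, List.length_cons, List.length_replicate] at hlen
  have hprefix := le_weightSum_mk_of_append_eq hx
  have hsum : weightSum 1 w = weightSum 1 (mk P) + weightSum 1 (mk T) := by
    rw [← mk_toWord (x := w), hy, ← mul_mk, weightSum_mul]
  have hT := (natAbs_weightSum_le_norm 1 (by simp) (mk T)).trans norm_mk_le
  have hnormw : norm w = P.length + T.length := by rw [norm, hy, List.length_append]
  omega

end PowMulInvMulInvPow

end FreeGroup

namespace G

open FreeGroup (of norm weightSum)

def proj₁ : G →* FreeGroup (Fin 2) :=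
  PresentedGroup.toGroup (f := ![of 0, of 1, 1, 1]) (by
    rintro r (rfl | rfl | rfl | rfl) <;> simp)

def proj₂ : G →* FreeGroup (Fin 2) :=
  PresentedGroup.toGroup (f := ![(of 0)⁻¹, (of 0)⁻¹, of 0, of 1]) (by
    rintro r (rfl | rfl | rfl | rfl) <;> simp)

@[simp] theorem proj₁_ga : proj₁ ga = of 0 := PresentedGroup.toGroup.of _
@[simp] theorem proj₁_gb : proj₁ gb = of 1 := PresentedGroup.toGroup.of _
@[simp] theorem proj₁_gc : proj₁ gc = 1 := PresentedGroup.toGroup.of _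
@[simp] theorem proj₁_gt : proj₁ gt = 1 := PresentedGroup.toGroup.of _
@[simp] theorem proj₂_ga : proj₂ ga = (of 0)⁻¹ := PresentedGroup.toGroup.of _
@[simp] theorem proj₂_gb : proj₂ gb = (of 0)⁻¹ := PresentedGroup.toGroup.of _
@[simp] theorem proj₂_gc : proj₂ gc = of 0 := PresentedGroup.toGroup.of _
@[simp] theorem proj₂_gt : proj₂ gt = of 1 := PresentedGroup.toGroup.of _

theorem closure_SG : Subgroup.closure SG = ⊤ := by
  convert PresentedGroup.closure_range_of grels
  ext g
  constructor
  · rintro (rfl | rfl | rfl | rfl) <;> exact ⟨_, rfl⟩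
  · rintro ⟨i, rfl⟩
    fin_cases i <;> simp [SG, ga, gb, gc, gt]

theorem eq_of_mem_or_inv_mem_SG {s : G} (hs : s ∈ SG ∨ s⁻¹ ∈ SG) :
    s = ga ∨ s = gb ∨ s = gc ∨ s = gt ∨ s = ga⁻¹ ∨ s = gb⁻¹ ∨ s = gc⁻¹ ∨ s = gt⁻¹ := by
  simp only [SG, Set.mem_insert_iff, Set.mem_singleton_iff, inv_eq_iff_eq_inv] at hs
  tauto

theorem commute_ga_gc : Commute ga gc := by
  have h := PresentedGroup.mk_eq_mk_of_mul_inv_mem (rels := grels)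
    (x := .of 0 * .of 2) (y := .of 2 * .of 0) (by simp [grels])
  simp only [map_mul] at h
  exact h

theorem commute_gb_gc : Commute gb gc := by
  have h := PresentedGroup.mk_eq_mk_of_mul_inv_mem (rels := grels)
    (x := .of 1 * .of 2) (y := .of 2 * .of 1) (by simp [grels])
  simp only [map_mul] at h
  exact h

theorem commute_ga_mul_gc_gt : Commute (ga * gc) gt := by
  have h := PresentedGroup.mk_eq_mk_of_mul_inv_mem (rels := grels)
    (x := .of 0 * .of 2 * .of 3) (y := .of 3 * .of 0 * .of 2) (by simp [grels])
  simp only [map_mul] at h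
  exact h.trans (mul_assoc _ _ _)

theorem commute_gb_mul_gc_gt : Commute (gb * gc) gt := by
  have h := PresentedGroup.mk_eq_mk_of_mul_inv_mem (rels := grels)
    (x := .of 1 * .of 2 * .of 3) (y := .of 3 * .of 1 * .of 2) (by simp [grels])
  simp only [map_mul] at h
  exact h.trans (mul_assoc _ _ _)

/-- The exponent sum of `c`, read off the two projections. -/
def cExp (g : G) : ℤ := weightSum 1 (proj₁ g) + weightSum ![1, 0] (proj₂ g)

@[simp] theorem cExp_mul (g h : G) : cExp (g * h) = cExp g + cExp h := by
  simp only [cExp, map_mul, FreeGroup.weightSum_mul]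
  ring

@[simp] theorem cExp_inv (g : G) : cExp g⁻¹ = -cExp g := by
  simp only [cExp, map_inv, FreeGroup.weightSum_inv]
  ring

@[simp] theorem cExp_gt : cExp gt = 0 := by simp [cExp]

def lowerLength (g : G) : ℕ := norm (proj₁ g) + (cExp g).natAbs

theorem lowerLength_one : lowerLength 1 = 0 := by simp [lowerLength, cExp]

theorem lowerLength_mul_le (x y : G) : lowerLength (x * y) ≤ lowerLength x + lowerLength y := by
  grw [lowerLength, lowerLength, lowerLength, map_mul, FreeGroup.norm_mul_le, cExp_mul,
    Int.natAbs_add_le]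
  omega

theorem lowerLength_le_one {s : G} (hs : s ∈ SG ∨ s⁻¹ ∈ SG) : lowerLength s ≤ 1 := by
  rcases eq_of_mem_or_inv_mem_SG hs with rfl | rfl | rfl | rfl | rfl | rfl | rfl | rfl <;>
    simp [lowerLength, cExp, FreeGroup.norm_of]

theorem lowerLength_prod_le {l : List G} (hl : ∀ s ∈ l, s ∈ SG ∨ s⁻¹ ∈ SG) :
    lowerLength l.prod ≤ l.length :=
  le_length_of_subadditive lowerLength lowerLength_one lowerLength_mul_le
    (fun _ => lowerLength_le_one) hl

theorem lowerLength_le_wordLength (g : G) : lowerLength g ≤ wordLength SG g :=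
  le_wordLength_of_subadditive lowerLength lowerLength_one lowerLength_mul_le
    (fun _ => lowerLength_le_one) closure_SG g

theorem lowerLength_inv_mul (x y : G) :
    lowerLength (x⁻¹ * y) = norm ((proj₁ x)⁻¹ * proj₁ y) + (cExp y - cExp x).natAbs := by
  simp [lowerLength, neg_add_eq_sub]

theorem natCast_wordLength_eq (g : G) :
    (wordLength SG g : ZMod 2) =
      (FreeGroup.lift (fun _ => Multiplicative.ofAdd (1 : ZMod 2)) (proj₂ g)).toAdd :=
  natCast_wordLength_eq_toAdd closure_SG ((FreeGroup.lift _).comp proj₂)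
    (by rintro s (rfl | rfl | rfl | rfl) <;> simp <;> rfl) g

def u (m : ℕ) : G := ga ^ (m + 2) * gb⁻¹ * (ga ^ (m + 1))⁻¹

def v (m : ℕ) : G := u m * gt * ga

theorem commute_u_gt (m : ℕ) : Commute (u m) gt := by
  have hu : u m = (ga * gc) ^ (m + 2) * (gb * gc)⁻¹ * ((ga * gc) ^ (m + 1))⁻¹ := by
    have hc : gc ^ (m + 1) * gb⁻¹ = gb⁻¹ * gc ^ (m + 1) :=
      ((commute_gb_gc.symm.pow_left _).inv_right).eq
    calc u m = ga ^ (m + 2) * (gb⁻¹ * gc ^ (m + 1)) * (gc ^ (m + 1))⁻¹ * (ga ^ (m + 1))⁻¹ := by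
          rw [u]; group
      _ = _ := by rw [← hc, commute_ga_gc.mul_pow, commute_ga_gc.mul_pow]; group
  rw [hu]
  exact ((commute_ga_mul_gc_gt.pow_left _).mul_left commute_gb_mul_gc_gt.inv_left).mul_left
    (commute_ga_mul_gc_gt.pow_left _).inv_left

theorem v_eq (m : ℕ) : v m = gt * (ga ^ (m + 2) * gb⁻¹ * (ga ^ m)⁻¹) := by
  rw [v, (commute_u_gt m).eq, u]
  group

@[simp] theorem proj₁_u (m : ℕ) :
    proj₁ (u m) = of 0 ^ (m + 2) * (of 1)⁻¹ * (of 0 ^ (m + 1))⁻¹ := by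
  simp [u]

@[simp] theorem proj₂_u (m : ℕ) : proj₂ (u m) = 1 := by
  simp only [u, map_mul, map_pow, map_inv, proj₂_ga, proj₂_gb]
  group

@[simp] theorem proj₁_v (m : ℕ) : proj₁ (v m) = of 0 ^ (m + 2) * (of 1)⁻¹ * (of 0 ^ m)⁻¹ := by
  simp only [v, map_mul, proj₁_u, proj₁_gt, proj₁_ga, mul_one]
  group

@[simp] theorem proj₂_v (m : ℕ) : proj₂ (v m) = of 1 * (of 0)⁻¹ := by
  simp [v]

@[simp] theorem cExp_u (m : ℕ) : cExp (u m) = 0 := by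
  simp only [cExp, proj₁_u, proj₂_u, FreeGroup.weightSum_mul, FreeGroup.weightSum_inv,
    FreeGroup.weightSum_pow, FreeGroup.weightSum_of, FreeGroup.weightSum_one, Pi.one_apply]
  push_cast
  ring

@[simp] theorem cExp_v (m : ℕ) : cExp (v m) = 0 := by
  simp only [cExp, proj₁_v, proj₂_v, FreeGroup.weightSum_mul, FreeGroup.weightSum_inv,
    FreeGroup.weightSum_pow, FreeGroup.weightSum_of, Pi.one_apply, Matrix.cons_val_zero,
    Matrix.cons_val_one]
  push_cast
  ring

theorem wordLength_mul_pow_mul_inv_mul_inv_pow_le {l : List G} (hl : ∀ s ∈ l, s ∈ SG ∨ s⁻¹ ∈ SG) (p q : ℕ) :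
    wordLength SG (l.prod * (ga ^ p * gb⁻¹ * (ga ^ q)⁻¹)) ≤ l.length + p + 1 + q := by
  have := wordLength_prod_le (l := l ++ List.replicate p ga ++ gb⁻¹ :: List.replicate q ga⁻¹)
    (S := SG) (by
      simp only [List.mem_append, List.mem_cons, List.mem_replicate]
      rintro s ((hs | ⟨-, rfl⟩) | rfl | ⟨-, rfl⟩)
      exacts [hl s hs, by simp [SG], by simp [SG], by simp [SG]])
  simp only [List.prod_append, List.prod_cons, List.prod_replicate, inv_pow, List.length_append,
    List.length_cons, List.length_replicate, mul_assoc] at this ⊢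
  omega

theorem wordLength_u (m : ℕ) : wordLength SG (u m) = 2 * m + 4 := by
  refine le_antisymm ?_ ?_
  · have h := wordLength_mul_pow_mul_inv_mul_inv_pow_le (l := []) (by simp) (m + 2) (m + 1)
    rw [List.prod_nil, one_mul, List.length_nil] at h
    exact h.trans_eq (by ring)
  · have h := lowerLength_le_wordLength (u m)
    rw [lowerLength, proj₁_u, FreeGroup.norm_pow_mul_inv_mul_inv_pow _ _ (by decide), cExp_u] at h
    omega

theorem wordLength_v (m : ℕ) : wordLength SG (v m) = 2 * m + 4 := by
  refine le_antisymm ?_ ?_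
  · have h := wordLength_mul_pow_mul_inv_mul_inv_pow_le (l := [gt]) (by simp [SG]) (m + 2) m
    rw [List.prod_singleton, ← v_eq, List.length_singleton] at h
    exact h.trans_eq (by ring)
  · have hlow := lowerLength_le_wordLength (v m)
    rw [lowerLength, proj₁_v, FreeGroup.norm_pow_mul_inv_mul_inv_pow _ _ (by decide),
      cExp_v] at hlow
    have heven := natCast_wordLength_eq (v m)
    simp only [proj₂_v, map_mul, map_inv, FreeGroup.lift_apply_of, toAdd_mul, toAdd_inv,
      toAdd_ofAdd, add_neg_cancel] at heven
    have := (ZMod.natCast_eq_zero_iff _ 2).1 heven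
    omega

theorem wordLength_inv_u_mul_v_le (m : ℕ) : wordLength SG ((u m)⁻¹ * v m) ≤ 2 := by
  simpa [v, mul_assoc] using wordLength_prod_le (l := [gt, ga]) (S := SG) (by simp [SG])

theorem norm_proj₂_eq_one {s : G} (hs : s ∈ SG ∨ s⁻¹ ∈ SG) : norm (proj₂ s) = 1 := by
  rcases eq_of_mem_or_inv_mem_SG hs with rfl | rfl | rfl | rfl | rfl | rfl | rfl | rfl <;>
    simp [FreeGroup.norm_of]

theorem eq_gt_of_proj₂_eq {s : G} (hs : s ∈ SG ∨ s⁻¹ ∈ SG) (h : proj₂ s = of 1) : s = gt := by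
  have h' := congrArg FreeGroup.toWord h
  rcases eq_of_mem_or_inv_mem_SG hs with rfl | rfl | rfl | rfl | rfl | rfl | rfl | rfl <;>
    simp [FreeGroup.toWord_inv, FreeGroup.invRev] at h' ⊢

theorem exists_eq_append_gt_cons {x : G} {l : List G} (hl : ∀ s ∈ l, s ∈ SG ∨ s⁻¹ ∈ SG)
    (hx : (proj₂ x).toWord.head? ≠ some (1, true))
    (hxl : (proj₂ (x * l.prod)).toWord.head? = some (1, true)) :
    ∃ l₁ l₂, l = l₁ ++ gt :: l₂ ∧ proj₂ (x * l₁.prod) = 1 := by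
  induction l generalizing x with
  | nil => simp_all
  | cons s l ih =>
    have hs := hl s List.mem_cons_self
    by_cases hcross : (proj₂ (x * s)).toWord.head? = some (1, true)
    · rw [map_mul] at hcross
      obtain ⟨hx1, hs1⟩ := FreeGroup.eq_one_of_head_toWord_mul (norm_proj₂_eq_one hs) hx hcross
      exact ⟨[], l, by rw [eq_gt_of_proj₂_eq hs hs1]; rfl, by simpa using hx1⟩
    · obtain ⟨l₁, l₂, rfl, h⟩ :=
        ih (fun t ht => hl t (List.mem_cons_of_mem s ht)) hcross (by simpa [mul_assoc] using hxl)
      exact ⟨s :: l₁, l₂, rfl, by simpa [mul_assoc] using h⟩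

theorem le_length_of_isPathIn {m : ℕ} {l : List G}
    (hpath : IsPathIn SG {g | wordLength SG g ≤ 2 * m + 4} (u m) (v m) l) :
    4 * m + 8 ≤ l.length := by
  obtain ⟨hl, hprod, hball⟩ := hpath
  obtain ⟨l₁, l₂, rfl, hh⟩ := exists_eq_append_gt_cons hl (x := u m) (by simp)
    (by rw [hprod, proj₂_v]; rfl)
  simp only [List.mem_append, List.mem_cons] at hl
  have hball' : wordLength SG (u m * l₁.prod * gt) ≤ 2 * m + 4 := by
    simpa [mul_assoc] using hball (l₁ ++ [gt]) ⟨l₂, by simp⟩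
  set h := u m * l₁.prod with h_def
  have hcExp : cExp h = weightSum 1 (proj₁ h) := by simp [cExp, hh]
  have hω : norm (proj₁ h) + (weightSum 1 (proj₁ h)).natAbs < 2 * (m + 2) := by
    have hodd := congrArg ZMod.val (natCast_wordLength_eq (h * gt))
    simp only [map_mul, hh, proj₂_gt, one_mul, FreeGroup.lift_apply_of, toAdd_ofAdd,
      ZMod.val_natCast, ZMod.val_one] at hodd
    have hlow := lowerLength_le_wordLength (h * gt)
    rw [lowerLength, cExp_mul, hcExp, map_mul, proj₁_gt, mul_one, cExp_gt, add_zero] at hlow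
    omega
  have hl₁ : norm ((proj₁ (u m))⁻¹ * proj₁ h) + (weightSum 1 (proj₁ h)).natAbs ≤ l₁.length := by
    have := lowerLength_prod_le fun s hs => hl s (.inl hs)
    rwa [show l₁.prod = (u m)⁻¹ * h by rw [h_def, inv_mul_cancel_left], lowerLength_inv_mul,
      cExp_u, hcExp, sub_zero] at this
  have hl₂ : norm ((proj₁ (v m))⁻¹ * proj₁ h) + (weightSum 1 (proj₁ h)).natAbs ≤ l₂.length := by
    have := lowerLength_prod_le fun s hs => hl s (.inr (.inr hs))
    rwa [show l₂.prod = (h * gt)⁻¹ * v m by rw [← hprod, h_def]; simp [mul_assoc],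
      lowerLength_inv_mul, cExp_v, cExp_mul, hcExp, ← FreeGroup.norm_inv_eq, mul_inv_rev, inv_inv,
      map_mul, proj₁_gt, mul_one, cExp_gt, add_zero, zero_sub, Int.natAbs_neg] at this
  have key₁ := FreeGroup.add_one_add_le_norm_inv_mul (m + 2) (m + 1) (by decide : (0 : Fin 2) ≠ 1) (proj₁ h) hω
  have key₂ := FreeGroup.add_one_add_le_norm_inv_mul (m + 2) m (by decide : (0 : Fin 2) ≠ 1) (proj₁ h) hω
  rw [proj₁_u] at hl₁
  rw [proj₁_v] at hl₂
  simp only [List.length_append, List.length_cons]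
  omega

end G

/-- The pair (G, {x,y,c,d}) with presentation
⟨x,y,c,d | xc=cx, yc=cy, xcd=dxc, ycd=dyc⟩ is not minimally almost convex:
no almost convexity condition AC_{f,r₀} with f(r) ≤ 2r - 1 holds. -/
theorem stmt11 :
    ¬ ∃ (f : ℕ → ℕ) (r₀ : ℕ), (∀ r : ℕ, 1 ≤ r → (f r : ℤ) ≤ 2 * r - 1) ∧ AlmostConvex SG f r₀ := by
  rintro ⟨f, r₀, hf, hAC⟩
  obtain ⟨l, hpath, hlen⟩ := hAC (2 * r₀ + 4) (by omega) (G.u r₀) (G.v r₀) (G.wordLength_u r₀)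
    (G.wordLength_v r₀) (G.wordLength_inv_u_mul_v_le r₀)
  have hlong := G.le_length_of_isPathIn hpath
  have hshort := hf (2 * r₀ + 4) (by omega)
  omega
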